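/- arXiv:q-alg/9412015 — 4 statements merged into one kernel-verified Lean document; each statement's English description precedes it below -/
import Mathlib

section
/- The Jacobi theta function θ₁ satisfies the three-term identity: for all x, y, z, w ∈ ℂ, θ₁(x+y)θ₁(x−y)θ₁(z+w)θ₁(z−w) + θ₁(x+z)θ₁(x−z)θ₁(w+y)θ₁(w−y) + θ₁(x+w)θ₁(x−w)θ₁(y+z)θ₁(y−z) = 0. -/
open Complex

/-- The Jacobi theta function `θ₁(z, τ)`. -/
noncomputable def theta1 (τ z : ℂ) : ℂ :=
  ∑' m : ℤ, Complex.exp (Real.pi * I * ((m : ℂ) + 1/2)^2 * τ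
    + 2 * Real.pi * I * ((m : ℂ) + 1/2) * (z + 1/2))

namespace Theta1Aux

noncomputable section

/-- The `m`-th term of the theta series with `c = z + 1/2`. -/
def f (τ c : ℂ) (m : ℤ) : ℂ :=
  Complex.exp (Real.pi * I * ((m : ℂ) + 1/2)^2 * τ
    + 2 * Real.pi * I * ((m : ℂ) + 1/2) * c)

lemma f_eq (τ c : ℂ) (m : ℤ) :
    f τ c m = Complex.exp (Real.pi * I * τ / 4 + Real.pi * I * c) *
      jacobiTheta₂_term m (c + τ / 2) τ := by
  rw [f, jacobiTheta₂_term, ← Complex.exp_add]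
  congr 1
  ring

lemma summable_f {τ : ℂ} (hτ : 0 < τ.im) (c : ℂ) : Summable (f τ c) := by
  have h := (summable_jacobiTheta₂_term_iff (c + τ / 2) τ).mpr hτ
  exact ((h.mul_left (Complex.exp (Real.pi * I * τ / 4 + Real.pi * I * c))).congr
    fun m => (f_eq τ c m).symm)

lemma summable_norm_f {τ : ℂ} (hτ : 0 < τ.im) (c : ℂ) :
    Summable fun m => ‖f τ c m‖ :=
  summable_norm_iff.mpr (summable_f hτ c)

/-- The reindexed pair function: `g τ a b (s, d)` collects the coefficient of
`exp(2πi(sa + db))` in `θ₁(a+b)θ₁(a-b)` (up to the characteristic shift). -/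
def g (τ a b : ℂ) (p : ℤ × ℤ) : ℂ :=
  if (p.1 + p.2) % 2 = 0 then 0 else
    Complex.exp (Real.pi * I * τ * ((p.1 : ℂ)^2 + (p.2 : ℂ)^2) / 2
      + 2 * Real.pi * I * ((p.1 : ℂ) * a + (p.2 : ℂ) * b) + Real.pi * I * (p.1 : ℂ))

/-- The reindexing map. -/
def φ (q : ℤ × ℤ) : ℤ × ℤ := (q.1 + q.2 + 1, q.1 - q.2)

lemma φ_inj : Function.Injective φ := by
  intro q q' h
  rw [Prod.ext_iff] at h ⊢
  simp only [φ] at h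
  omega

lemma g_comp (τ a b : ℂ) (q : ℤ × ℤ) :
    g τ a b (φ q) = f τ (a + b + 1/2) q.1 * f τ (a - b + 1/2) q.2 := by
  rcases q with ⟨m, n⟩
  rw [g, if_neg (by simp only [φ]; omega), f, f, ← Complex.exp_add]
  congr 1
  simp only [φ]
  push_cast
  ring

lemma g_support (τ a b : ℂ) : Function.support (g τ a b) ⊆ Set.range φ := by
  intro p hp
  rw [Function.mem_support] at hp
  have h : ¬ ((p.1 + p.2) % 2 = 0) := fun h => hp (by rw [g, if_pos h])
  exact ⟨((p.1 + p.2 - 1) / 2, (p.1 - p.2 - 1) / 2), by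
    rw [Prod.ext_iff]; constructor <;> simp only [φ] <;> omega⟩

lemma g_vanish (τ a b : ℂ) : ∀ p ∉ Set.range φ, g τ a b p = 0 := by
  intro p hp
  by_contra h
  exact hp (g_support τ a b h)

lemma summable_g {τ : ℂ} (hτ : 0 < τ.im) (a b : ℂ) : Summable (g τ a b) := by
  refine (φ_inj.summable_iff (g_vanish τ a b)).mp ?_
  exact (summable_mul_of_summable_norm (summable_norm_f hτ (a + b + 1/2))
    (summable_norm_f hτ (a - b + 1/2))).congr fun q => (g_comp τ a b q).symm

lemma summable_norm_g {τ : ℂ} (hτ : 0 < τ.im) (a b : ℂ) :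
    Summable fun p => ‖g τ a b p‖ :=
  summable_norm_iff.mpr (summable_g hτ a b)

lemma pair {τ : ℂ} (hτ : 0 < τ.im) (a b : ℂ) :
    theta1 τ (a + b) * theta1 τ (a - b) = ∑' p : ℤ × ℤ, g τ a b p := by
  have h1 : theta1 τ (a + b) = ∑' m : ℤ, f τ (a + b + 1/2) m := by
    rfl
  have h2 : theta1 τ (a - b) = ∑' m : ℤ, f τ (a - b + 1/2) m := by
    rfl
  rw [h1, h2, tsum_mul_tsum_of_summable_norm (summable_norm_f hτ (a + b + 1/2))
    (summable_norm_f hτ (a - b + 1/2)),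
    ← φ_inj.tsum_eq (g_support τ a b)]
  exact tsum_congr fun q => (g_comp τ a b q).symm

/-- The common exponential base. -/
def E (τ : ℂ) (s d t e : ℤ) (x y z w : ℂ) : ℂ :=
  Complex.exp (Real.pi * I * τ * ((s : ℂ)^2 + (d : ℂ)^2 + (t : ℂ)^2 + (e : ℂ)^2) / 2
    + 2 * Real.pi * I * ((s : ℂ) * x + (d : ℂ) * y + (t : ℂ) * z + (e : ℂ) * w))

lemma g_mul (τ a b c d' : ℂ) (p q : ℤ × ℤ) :
    g τ a b p * g τ c d' q =
      if (p.1 + p.2) % 2 = 0 ∨ (q.1 + q.2) % 2 = 0 then 0 else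
        E τ p.1 p.2 q.1 q.2 a b c d' *
          Complex.exp (Real.pi * I * ((p.1 : ℂ) + (q.1 : ℂ))) := by
  rw [g, g]
  by_cases h1 : (p.1 + p.2) % 2 = 0
  · rw [if_pos h1, if_pos (Or.inl h1), zero_mul]
  · by_cases h2 : (q.1 + q.2) % 2 = 0
    · rw [if_neg h1, if_pos h2, if_pos (Or.inr h2), mul_zero]
    · rw [if_neg h1, if_neg h2, if_neg (by tauto), E, ← Complex.exp_add, ← Complex.exp_add]
      congr 1
      ring

lemma E_comm2 (τ : ℂ) (s d t e : ℤ) (x y z w : ℂ) :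
    E τ s t e d x z w y = E τ s d t e x y z w := by
  rw [E, E]; congr 1; ring

lemma E_comm3 (τ : ℂ) (s d t e : ℤ) (x y z w : ℂ) :
    E τ s e d t x w y z = E τ s d t e x y z w := by
  rw [E, E]; congr 1; ring

lemma key {a b c d : ℤ} (h : (a + b - c - d) % 2 = 1) :
    Complex.exp (Real.pi * I * ((a : ℂ) + (b : ℂ))) +
      Complex.exp (Real.pi * I * ((c : ℂ) + (d : ℂ))) = 0 := by
  obtain ⟨k, hk⟩ : ∃ k : ℤ, a + b = c + d + (2 * k + 1) := ⟨(a + b - c - d - 1) / 2, by omega⟩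
  have hcast : ((a : ℂ) + b) = (c : ℂ) + d + (2 * (k : ℂ) + 1) := by exact_mod_cast hk
  have h1 : (Real.pi : ℂ) * I * ((a : ℂ) + (b : ℂ))
      = (Real.pi : ℂ) * I * ((c : ℂ) + (d : ℂ)) + (k : ℂ) * (2 * (Real.pi : ℂ) * I)
        + (Real.pi : ℂ) * I := by
    rw [hcast]; ring
  rw [h1, Complex.exp_add, Complex.exp_add, Complex.exp_int_mul_two_pi_mul_I,
    Complex.exp_pi_mul_I]
  ring

lemma pointwise (τ : ℂ) (x y z w : ℂ) (s d t e : ℤ) :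
    g τ x y (s, d) * g τ z w (t, e) + g τ x z (s, t) * g τ w y (e, d)
      + g τ x w (s, e) * g τ y z (d, t) = 0 := by
  rw [g_mul, g_mul, g_mul]
  simp only
  rw [E_comm2 τ s d t e x y z w, E_comm3 τ s d t e x y z w]
  rcases Int.emod_two_eq s with hs | hs <;> rcases Int.emod_two_eq d with hd | hd <;>
    rcases Int.emod_two_eq t with ht | ht <;> rcases Int.emod_two_eq e with he | he <;>
    split_ifs with h1 h2 h3 <;>
    first
      | omega
      | (simp only [zero_add, add_zero]
         rw [← mul_add, key, mul_zero]
         omega)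
      | simp

end

end Theta1Aux

set_option maxHeartbeats 1600000 in
theorem theta1_three_term (τ : ℂ) (hτ : 0 < τ.im) (x y z w : ℂ) :
    theta1 τ (x + y) * theta1 τ (x - y) * theta1 τ (z + w) * theta1 τ (z - w)
      + theta1 τ (x + z) * theta1 τ (x - z) * theta1 τ (w + y) * theta1 τ (w - y)
      + theta1 τ (x + w) * theta1 τ (x - w) * theta1 τ (y + z) * theta1 τ (y - z) = 0 := by
  classical
  open Theta1Aux in
  -- the two reindexing equivalences
  let σ2 : (ℤ × ℤ) × (ℤ × ℤ) ≃ (ℤ × ℤ) × (ℤ × ℤ) :=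
    ⟨fun v => ((v.1.1, v.2.1), (v.2.2, v.1.2)),
     fun r => ((r.1.1, r.2.2), (r.1.2, r.2.1)),
     fun v => rfl, fun r => rfl⟩
  let σ3 : (ℤ × ℤ) × (ℤ × ℤ) ≃ (ℤ × ℤ) × (ℤ × ℤ) :=
    ⟨fun v => ((v.1.1, v.2.2), (v.1.2, v.2.1)),
     fun r => ((r.1.1, r.2.1), (r.2.2, r.1.2)),
     fun v => rfl, fun r => rfl⟩
  have e1 : theta1 τ (x + y) * theta1 τ (x - y) * theta1 τ (z + w) * theta1 τ (z - w)
      = ∑' v : (ℤ × ℤ) × (ℤ × ℤ), g τ x y v.1 * g τ z w v.2 := by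
    rw [mul_assoc, pair hτ x y, pair hτ z w,
      tsum_mul_tsum_of_summable_norm (summable_norm_g hτ x y) (summable_norm_g hτ z w)]
  have e2 : theta1 τ (x + z) * theta1 τ (x - z) * theta1 τ (w + y) * theta1 τ (w - y)
      = ∑' v : (ℤ × ℤ) × (ℤ × ℤ), g τ x z ((σ2 v).1) * g τ w y ((σ2 v).2) := by
    rw [mul_assoc, pair hτ x z, pair hτ w y,
      tsum_mul_tsum_of_summable_norm (summable_norm_g hτ x z) (summable_norm_g hτ w y),
      ← σ2.tsum_eq (fun r : (ℤ × ℤ) × (ℤ × ℤ) => g τ x z r.1 * g τ w y r.2)]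
  have e3 : theta1 τ (x + w) * theta1 τ (x - w) * theta1 τ (y + z) * theta1 τ (y - z)
      = ∑' v : (ℤ × ℤ) × (ℤ × ℤ), g τ x w ((σ3 v).1) * g τ y z ((σ3 v).2) := by
    rw [mul_assoc, pair hτ x w, pair hτ y z,
      tsum_mul_tsum_of_summable_norm (summable_norm_g hτ x w) (summable_norm_g hτ y z),
      ← σ3.tsum_eq (fun r : (ℤ × ℤ) × (ℤ × ℤ) => g τ x w r.1 * g τ y z r.2)]
  have S1 : Summable fun v : (ℤ × ℤ) × (ℤ × ℤ) => g τ x y v.1 * g τ z w v.2 :=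
    summable_mul_of_summable_norm (summable_norm_g hτ x y) (summable_norm_g hτ z w)
  have S2 : Summable fun v : (ℤ × ℤ) × (ℤ × ℤ) => g τ x z ((σ2 v).1) * g τ w y ((σ2 v).2) :=
    σ2.summable_iff.mpr
      (summable_mul_of_summable_norm (summable_norm_g hτ x z) (summable_norm_g hτ w y))
  have S3 : Summable fun v : (ℤ × ℤ) × (ℤ × ℤ) => g τ x w ((σ3 v).1) * g τ y z ((σ3 v).2) :=
    σ3.summable_iff.mpr
      (summable_mul_of_summable_norm (summable_norm_g hτ x w) (summable_norm_g hτ y z))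
  rw [e1, e2, e3, ← Summable.tsum_add S1 S2, ← Summable.tsum_add (S1.add S2) S3]
  rw [show (0 : ℂ) = ∑' _ : (ℤ × ℤ) × (ℤ × ℤ), (0 : ℂ) from tsum_zero.symm]
  refine tsum_congr fun v => ?_
  exact pointwise τ x y z w v.1.1 v.1.2 v.2.1 v.2.2
end

section
/- The operators A and B defined on entire functions by (Af)(z) = −f(z+1/k) and (Bf)(z) = −exp(2πi(z+τ/(2k)))·f(z+τ/k) preserve the space Ṽ_k = Ṽ_k(0), and on the basis e_j(z) = ϑ[1/2−j/k, k/2](−kz, kτ) (j ∈ ℤ/kℤ) they act by A e_j = exp(2πij/k)·e_j and B e_j = e_{j+1}. -/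
open Complex

/-- Theta function with characteristics `ϑ[a,b](z,τ)`. -/
noncomputable def thetaChar (a b z τ : ℂ) : ℂ :=
  ∑' m : ℤ, Complex.exp (Real.pi * I * ((m : ℂ) + a)^2 * τ
    + 2 * Real.pi * I * ((m : ℂ) + a) * (z + b))

/-- Membership in `Ṽ_k(ξ)`: entire with the two stated functional equations. -/
def InTildeV (τ : ℂ) (k : ℕ) (ξ : ℂ) (f : ℂ → ℂ) : Prop :=
  Differentiable ℂ f ∧ (∀ z, f (z + 1) = (-1 : ℂ)^k * f z) ∧
    ∀ z, f (z + τ) =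
      (-1 : ℂ)^k * Complex.exp (-(2 * Real.pi * I) * (k * z - ξ + k * τ / 2)) * f z

/-- The operator `A`: `(Af)(z) = -f(z + 1/k)`. -/
noncomputable def opA (k : ℕ) (f : ℂ → ℂ) : ℂ → ℂ := fun z => -f (z + 1/k)

/-- The operator `B`: `(Bf)(z) = -exp(2πi(z + τ/(2k))) f(z + τ/k)`. -/
noncomputable def opB (τ : ℂ) (k : ℕ) (f : ℂ → ℂ) : ℂ → ℂ :=
  fun z => -Complex.exp (2 * Real.pi * I * (z + τ / (2 * k))) * f (z + τ / k)

/-- The basis `e_j(z) = ϑ[1/2 - j/k, k/2](-kz, kτ)` of `Ṽ_k = Ṽ_k(0)`. -/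
noncomputable def eBasis (τ : ℂ) (k : ℕ) (j : ZMod k) : ℂ → ℂ :=
  fun z => thetaChar (1/2 - (j.val : ℂ)/k) (k/2) (-(k * z)) (k * τ)

lemma exp_eq_of_eq_add_int {A B : ℂ} (n : ℤ) (h : A = B + n * (2 * Real.pi * I)) :
    Complex.exp A = Complex.exp B := by
  rw [h, Complex.exp_add, Complex.exp_int_mul_two_pi_mul_I, mul_one]

lemma neg_exp (A : ℂ) : -Complex.exp A = Complex.exp (Real.pi * I + A) := by
  rw [Complex.exp_add, Complex.exp_pi_mul_I]; ring

lemma thetaChar_sub_one (a b w t : ℂ) :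
    thetaChar a b (w - 1) t = Complex.exp (-(2 * Real.pi * I) * a) * thetaChar a b w t := by
  unfold thetaChar
  rw [← tsum_mul_left]
  refine tsum_congr fun m => ?_
  rw [← Complex.exp_add]
  exact exp_eq_of_eq_add_int (-m) (by push_cast; ring)

lemma thetaChar_char_shift (a b w t e : ℂ) :
    thetaChar (a - e) b w t =
      Complex.exp (Real.pi * I * e^2 * t - 2 * Real.pi * I * e * (w + b)) *
        thetaChar a b (w - e * t) t := by
  unfold thetaChar
  rw [← tsum_mul_left]
  refine tsum_congr fun m => ?_
  rw [← Complex.exp_add]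
  exact congrArg Complex.exp (by ring)

lemma thetaChar_add_int (a b w t : ℂ) (c : ℤ) :
    thetaChar (a + (c : ℂ)) b w t = thetaChar a b w t := by
  unfold thetaChar
  calc ∑' m : ℤ, Complex.exp (Real.pi * I * ((m : ℂ) + (a + (c:ℂ)))^2 * t
        + 2 * Real.pi * I * ((m : ℂ) + (a + (c:ℂ))) * (w + b))
      = ∑' m : ℤ, (fun m' : ℤ => Complex.exp (Real.pi * I * ((m' : ℂ) + a)^2 * t
          + 2 * Real.pi * I * ((m' : ℂ) + a) * (w + b))) (Equiv.addRight c m) := by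
        refine tsum_congr fun m => ?_
        simp only [Equiv.coe_addRight]
        exact congrArg Complex.exp (by push_cast; ring)
    _ = _ := (Equiv.addRight c).tsum_eq (fun m' : ℤ => Complex.exp (Real.pi * I * ((m' : ℂ) + a)^2 * t
          + 2 * Real.pi * I * ((m' : ℂ) + a) * (w + b)))

/-- `A` and `B` preserve `Ṽ_k` and act on the basis by
`A e_j = exp(2πij/k) e_j` and `B e_j = e_{j+1}`. -/
theorem opA_opB_action (τ : ℂ) (hτ : 0 < τ.im) (k : ℕ) [NeZero k] :
    (∀ f : ℂ → ℂ, InTildeV τ k 0 f → InTildeV τ k 0 (opA k f)) ∧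
    (∀ f : ℂ → ℂ, InTildeV τ k 0 f → InTildeV τ k 0 (opB τ k f)) ∧
    (∀ j : ZMod k, opA k (eBasis τ k j) =
      fun z => Complex.exp (2 * Real.pi * I * (j.val : ℂ) / k) * eBasis τ k j z) ∧
    (∀ j : ZMod k, opB τ k (eBasis τ k j) = eBasis τ k (j + 1)) := by
  have hk : (k : ℂ) ≠ 0 := Nat.cast_ne_zero.2 (NeZero.ne k)
  refine ⟨?_, ?_, ?_, ?_⟩
  · rintro f ⟨hd, h1, h2⟩
    refine ⟨(hd.comp (differentiable_id.add_const _)).neg, fun z => ?_, fun z => ?_⟩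
    · simp only [opA]
      rw [show z + 1 + 1/(k:ℂ) = (z + 1/k) + 1 by ring, h1]; ring
    · simp only [opA]
      rw [show z + τ + 1/(k:ℂ) = (z + 1/k) + τ by ring, h2,
        exp_eq_of_eq_add_int (A := -(2 * Real.pi * I) * (k * (z + 1/k) - 0 + k * τ / 2))
          (B := -(2 * Real.pi * I) * (k * z - 0 + k * τ / 2)) (-1) (by push_cast; field_simp; ring)]
      ring
  · rintro f ⟨hd, h1, h2⟩
    refine ⟨(((differentiable_id.add_const _).const_mul _).cexp.neg.mul
      (hd.comp (differentiable_id.add_const _))), fun z => ?_, fun z => ?_⟩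
    · simp only [opB]
      rw [show z + 1 + τ/(k:ℂ) = (z + τ/k) + 1 by ring, h1,
        exp_eq_of_eq_add_int (A := 2 * Real.pi * I * (z + 1 + τ / (2 * k)))
          (B := 2 * Real.pi * I * (z + τ / (2 * k))) 1 (by push_cast; ring)]
      ring
    · simp only [opB]
      rw [show z + τ + τ/(k:ℂ) = (z + τ/k) + τ by ring, h2]
      have hexp : Complex.exp (2 * Real.pi * I * (z + τ + τ / (2 * k))) *
          Complex.exp (-(2 * Real.pi * I) * (k * (z + τ/k) - 0 + k * τ / 2)) =
          Complex.exp (-(2 * Real.pi * I) * (k * z - 0 + k * τ / 2)) *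
          Complex.exp (2 * Real.pi * I * (z + τ / (2 * k))) := by
        rw [← Complex.exp_add, ← Complex.exp_add]
        congr 1
        field_simp
        ring
      linear_combination (-((-1:ℂ)^k) * f (z + τ/k)) * hexp
  · intro j
    funext z
    simp only [opA, eBasis]
    rw [show -((k:ℂ) * (z + 1/k)) = (-((k:ℂ) * z)) - 1 by field_simp; ring, thetaChar_sub_one]
    have hc : -Complex.exp (-(2 * Real.pi * I) * (1/2 - (j.val:ℂ)/k)) =
        Complex.exp (2 * Real.pi * I * (j.val:ℂ) / k) := by
      rw [neg_exp]
      exact congrArg Complex.exp (by ring)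
    rw [← hc]; ring
  · intro j
    funext z
    have h0 : ((((j+1).val : ℤ) - ((j.val : ℤ) + 1) : ℤ) : ZMod k) = 0 := by
      push_cast
      rw [ZMod.natCast_val, ZMod.natCast_val, ZMod.cast_id, ZMod.cast_id]
      ring
    obtain ⟨c, hcc⟩ := (ZMod.intCast_zmod_eq_zero_iff_dvd _ k).1 h0
    have hn : (((j+1).val : ℂ)) = (j.val : ℂ) + 1 + (c : ℂ) * k := by
      have := congrArg (Int.cast : ℤ → ℂ) hcc
      push_cast at this
      linear_combination this
    simp only [opB, eBasis]
    have e1 : (1:ℂ)/2 - ((j+1).val : ℂ)/k = ((1/2 - (j.val:ℂ)/k) - 1/k) + ((-c : ℤ) : ℂ) := by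
      rw [hn]; push_cast; field_simp; ring
    conv_rhs => rw [e1, thetaChar_add_int, thetaChar_char_shift,
      show -((k:ℂ)*z) - (1/(k:ℂ)) * ((k:ℂ)*τ) = -((k:ℂ) * (z + τ/k)) by field_simp; ring]
    have hs : -Complex.exp (2 * Real.pi * I * (z + τ / (2 * k))) =
        Complex.exp (Real.pi * I * (1/(k:ℂ))^2 * ((k:ℂ)*τ)
          - 2 * Real.pi * I * (1/(k:ℂ)) * (-((k:ℂ)*z) + (k:ℂ)/2)) := by
      rw [neg_exp]
      exact exp_eq_of_eq_add_int 1 (by field_simp; ring)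
    rw [hs]
end

section
/- The modified elliptic R-operator satisfies the quasi-periodicity Ř_k(ξ+1) = −(1⊗A)·Ř_k(ξ)·(A⊗1)^{−1} on Ṽ_k ⊗ Ṽ_k, where (Af)(z) = −f(z+1/k). -/
open Complex

/-- `f(z₁,z₂)` is a finite sum of products `g(z₁)h(z₂)` with `P g` and `Q h`. -/
def TensorMem (P Q : (ℂ → ℂ) → Prop) (f : ℂ → ℂ → ℂ) : Prop :=
  ∃ (N : ℕ) (g h : ℕ → ℂ → ℂ), (∀ i < N, P (g i) ∧ Q (h i)) ∧
    ∀ z₁ z₂, f z₁ z₂ = ∑ i ∈ Finset.range N, g i z₁ * h i z₂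

/-- The modified elliptic R-operator `Ř_k(ξ)`. -/
noncomputable def Rk (τ μ : ℂ) (k : ℕ) (ξ : ℂ) (f : ℂ → ℂ → ℂ) (z₁ z₂ : ℂ) : ℂ :=
  theta1 τ ξ * theta1 τ (z₂ - z₁ + (ξ + μ)/k - μ) * deriv (theta1 τ) 0 /
      (theta1 τ (-μ) * theta1 τ (z₂ - z₁ + (ξ + μ)/k)) * f (z₂ + μ/k) (z₁ - μ/k)
    + theta1 τ (z₂ - z₁ + (ξ + μ)/k - ξ) * deriv (theta1 τ) 0 /
        theta1 τ (z₂ - z₁ + (ξ + μ)/k) * f (z₁ - ξ/k) (z₂ + ξ/k)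

/-- `1 ⊗ A`, acting in the second variable. -/
noncomputable def op2A (k : ℕ) (f : ℂ → ℂ → ℂ) : ℂ → ℂ → ℂ :=
  fun z₁ z₂ => -f z₁ (z₂ + 1/k)

/-- `A⁻¹ ⊗ 1`, acting in the first variable, where `(A⁻¹f)(z) = -f(z - 1/k)`. -/
noncomputable def op1Ainv (k : ℕ) (f : ℂ → ℂ → ℂ) : ℂ → ℂ → ℂ :=
  fun z₁ z₂ => -f (z₁ - 1/k) z₂

lemma theta1_add_one (τ z : ℂ) : theta1 τ (z + 1) = -theta1 τ z := by
  unfold theta1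
  rw [← tsum_neg]
  congr 1
  ext m
  have h : (Real.pi * I * ((m : ℂ) + 1/2)^2 * τ
      + 2 * Real.pi * I * ((m : ℂ) + 1/2) * (z + 1 + 1/2))
      = (Real.pi * I * ((m : ℂ) + 1/2)^2 * τ
        + 2 * Real.pi * I * ((m : ℂ) + 1/2) * (z + 1/2))
        + ((m : ℂ) * (2 * Real.pi * I) + Real.pi * I) := by ring
  rw [h, Complex.exp_add, Complex.exp_add, Complex.exp_add, Complex.exp_int_mul_two_pi_mul_I,
    Complex.exp_pi_mul_I]
  ring

/-- Quasi-periodicity `Ř_k(ξ+1) = -(1⊗A) Ř_k(ξ) (A⊗1)⁻¹` on `Ṽ_k ⊗ Ṽ_k`. -/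
theorem Rk_shift_one (τ : ℂ) (hτ : 0 < τ.im) (μ : ℂ)
    (hμ : ¬∃ a b : ℤ, μ = (a : ℂ) + (b : ℂ) * τ)
    (k : ℕ) (hk : 1 ≤ k) (ξ : ℂ) (f : ℂ → ℂ → ℂ)
    (hf : TensorMem (InTildeV τ k 0) (InTildeV τ k 0) f)
    (z₁ z₂ : ℂ) (hden : theta1 τ (z₂ - z₁ + (ξ + 1 + μ)/k) ≠ 0) :
    Rk τ μ k (ξ + 1) f z₁ z₂ =
      -op2A k (Rk τ μ k ξ (op1Ainv k f)) z₁ z₂ := by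
  have hk0 : (k : ℂ) ≠ 0 := Nat.cast_ne_zero.mpr (by omega)
  simp only [Rk, op2A, op1Ainv, neg_neg]
  have e1 : z₂ + 1/(k:ℂ) - z₁ + (ξ + μ)/k = z₂ - z₁ + (ξ + 1 + μ)/k := by
    field_simp; ring
  have e2 : z₂ + 1/(k:ℂ) + μ/k - 1/k = z₂ + μ/k := by ring
  have e3 : z₁ - ξ/(k:ℂ) - 1/k = z₁ - (ξ + 1)/k := by field_simp; ring
  have e4 : z₂ + 1/(k:ℂ) + ξ/k = z₂ + (ξ + 1)/k := by field_simp; ring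
  rw [e1, e2, e3, e4]
  have t1 : theta1 τ (ξ + 1) = -theta1 τ ξ := theta1_add_one τ ξ
  have t2 : theta1 τ (z₂ - z₁ + (ξ + 1 + μ)/k - ξ)
      = -theta1 τ (z₂ - z₁ + (ξ + 1 + μ)/k - (ξ + 1)) := by
    rw [show z₂ - z₁ + (ξ + 1 + μ)/(k:ℂ) - ξ
      = (z₂ - z₁ + (ξ + 1 + μ)/k - (ξ + 1)) + 1 by ring, theta1_add_one]
  rw [t1, t2]
  ring
end

section
/- The modified elliptic R-operator satisfies Ř_k(ξ+τ) = −exp(−2πi(ξ+τ/2−μ/k))·(1⊗B)·Ř_k(ξ)·(B⊗1)^{−1} on Ṽ_k ⊗ Ṽ_k, where (Bf)(z) = −exp(2πi(z+τ/(2k)))·f(z+τ/k). -/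
open Complex

/-- `1 ⊗ B`, acting in the second variable. -/
noncomputable def op2B (τ : ℂ) (k : ℕ) (f : ℂ → ℂ → ℂ) : ℂ → ℂ → ℂ :=
  fun z₁ z₂ => -Complex.exp (2 * Real.pi * I * (z₂ + τ / (2 * k))) * f z₁ (z₂ + τ / k)

/-- `B⁻¹ ⊗ 1`, acting in the first variable, where
`(B⁻¹f)(z) = -exp(-2πi(z - τ/(2k))) f(z - τ/k)`. -/
noncomputable def op1Binv (τ : ℂ) (k : ℕ) (f : ℂ → ℂ → ℂ) : ℂ → ℂ → ℂ :=
  fun z₁ z₂ => -Complex.exp (-(2 * Real.pi * I) * (z₁ - τ / (2 * k))) * f (z₁ - τ / k) z₂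

lemma neg_exp_mul_exp (a b : ℂ) :
    -Complex.exp a * Complex.exp b = Complex.exp (-(Real.pi * I) + (a + b)) := by
  rw [Complex.exp_add, Complex.exp_add, Complex.exp_neg, Complex.exp_pi_mul_I]
  norm_num

lemma theta1_add_tau (τ z : ℂ) :
    theta1 τ (z + τ) = -Complex.exp (-(2 * Real.pi * I) * z - Real.pi * I * τ) * theta1 τ z := by
  unfold theta1
  have step : ∀ m : ℤ, Complex.exp (Real.pi * I * ((m : ℂ) + 1/2)^2 * τ
      + 2 * Real.pi * I * ((m : ℂ) + 1/2) * (z + τ + 1/2))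
      = -Complex.exp (-(2 * Real.pi * I) * z - Real.pi * I * τ) *
        Complex.exp (Real.pi * I * (((m + 1 : ℤ) : ℂ) + 1/2)^2 * τ
          + 2 * Real.pi * I * (((m + 1 : ℤ) : ℂ) + 1/2) * (z + 1/2)) := by
    intro m
    rw [neg_exp_mul_exp]
    congr 1
    push_cast
    ring
  calc (∑' m : ℤ, Complex.exp (Real.pi * I * ((m : ℂ) + 1/2)^2 * τ
      + 2 * Real.pi * I * ((m : ℂ) + 1/2) * (z + τ + 1/2)))
      = ∑' m : ℤ, -Complex.exp (-(2 * Real.pi * I) * z - Real.pi * I * τ) *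
        Complex.exp (Real.pi * I * (((m + 1 : ℤ) : ℂ) + 1/2)^2 * τ
          + 2 * Real.pi * I * (((m + 1 : ℤ) : ℂ) + 1/2) * (z + 1/2)) := tsum_congr step
    _ = -Complex.exp (-(2 * Real.pi * I) * z - Real.pi * I * τ) *
        ∑' m : ℤ, Complex.exp (Real.pi * I * (((m + 1 : ℤ) : ℂ) + 1/2)^2 * τ
          + 2 * Real.pi * I * (((m + 1 : ℤ) : ℂ) + 1/2) * (z + 1/2)) := tsum_mul_left
    _ = -Complex.exp (-(2 * Real.pi * I) * z - Real.pi * I * τ) *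
        ∑' m : ℤ, Complex.exp (Real.pi * I * ((m : ℂ) + 1/2)^2 * τ
          + 2 * Real.pi * I * ((m : ℂ) + 1/2) * (z + 1/2)) := by
        congr 1
        exact (Equiv.addRight (1 : ℤ)).tsum_eq
          (fun n : ℤ => Complex.exp (Real.pi * I * ((n : ℂ) + 1/2)^2 * τ
            + 2 * Real.pi * I * ((n : ℂ) + 1/2) * (z + 1/2)))

/-- Quasi-periodicity
`Ř_k(ξ+τ) = -exp(-2πi(ξ+τ/2-μ/k)) (1⊗B) Ř_k(ξ) (B⊗1)⁻¹` on `Ṽ_k ⊗ Ṽ_k`. -/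
theorem Rk_shift_tau (τ : ℂ) (hτ : 0 < τ.im) (μ : ℂ)
    (hμ : ¬∃ a b : ℤ, μ = (a : ℂ) + (b : ℂ) * τ)
    (k : ℕ) (hk : 1 ≤ k) (ξ : ℂ) (f : ℂ → ℂ → ℂ)
    (hf : TensorMem (InTildeV τ k 0) (InTildeV τ k 0) f)
    (z₁ z₂ : ℂ) (hden : theta1 τ (z₂ - z₁ + (ξ + τ + μ)/k) ≠ 0) :
    Rk τ μ k (ξ + τ) f z₁ z₂ =
      -Complex.exp (-(2 * Real.pi * I) * (ξ + τ/2 - μ/k)) *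
        op2B τ k (Rk τ μ k ξ (op1Binv τ k f)) z₁ z₂ := by
  have h2 := theta1_add_tau τ (z₂ - z₁ + (ξ + τ + μ)/(k:ℂ) - (ξ + τ))
  rw [show z₂ - z₁ + (ξ + τ + μ)/(k:ℂ) - (ξ + τ) + τ
      = z₂ + τ/(k:ℂ) - z₁ + (ξ + μ)/(k:ℂ) - ξ by ring] at h2
  simp only [Rk, op2B, op1Binv]
  rw [theta1_add_tau τ ξ, h2,
    show z₂ + τ/(k:ℂ) - z₁ + (ξ + μ)/(k:ℂ) = z₂ - z₁ + (ξ + τ + μ)/(k:ℂ) by ring,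
    show z₂ + τ/(k:ℂ) + μ/(k:ℂ) - τ/(k:ℂ) = z₂ + μ/(k:ℂ) by ring,
    show z₁ - ξ/(k:ℂ) - τ/(k:ℂ) = z₁ - (ξ + τ)/(k:ℂ) by ring,
    show z₂ + τ/(k:ℂ) + ξ/(k:ℂ) = z₂ + (ξ + τ)/(k:ℂ) by ring]
  have ea : Complex.exp (-(2 * (Real.pi:ℂ) * I) * ξ - (Real.pi:ℂ) * I * τ)
      = Complex.exp (-(2 * (Real.pi:ℂ) * I) * (ξ + τ/2 - μ/(k:ℂ)))
        * Complex.exp (2 * (Real.pi:ℂ) * I * (z₂ + τ / (2 * (k:ℂ))))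
        * Complex.exp (-(2 * (Real.pi:ℂ) * I) * (z₂ + τ/(k:ℂ) + μ/(k:ℂ) - τ / (2 * (k:ℂ)))) := by
    rw [← Complex.exp_add, ← Complex.exp_add]
    exact congrArg Complex.exp (by ring)
  have eb : Complex.exp (-(2 * (Real.pi:ℂ) * I) * (ξ + τ/2 - μ/(k:ℂ)))
        * Complex.exp (2 * (Real.pi:ℂ) * I * (z₂ + τ / (2 * (k:ℂ))))
        * Complex.exp (-(2 * (Real.pi:ℂ) * I) * (z₂ - z₁ + (ξ + τ + μ)/(k:ℂ) - (ξ + τ)) - (Real.pi:ℂ) * I * τ)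
        * Complex.exp (-(2 * (Real.pi:ℂ) * I) * (z₁ - ξ/(k:ℂ) - τ / (2 * (k:ℂ)))) = 1 := by
    rw [← Complex.exp_add, ← Complex.exp_add, ← Complex.exp_add, ← Complex.exp_zero]
    exact congrArg Complex.exp (by ring)
  set D := deriv (theta1 τ) 0
  set T1 := theta1 τ ξ
  set T2 := theta1 τ (z₂ - z₁ + (ξ + τ + μ)/(k:ℂ) - μ)
  set T3 := theta1 τ (-μ)
  set T4 := theta1 τ (z₂ - z₁ + (ξ + τ + μ)/(k:ℂ))
  set T5 := theta1 τ (z₂ - z₁ + (ξ + τ + μ)/(k:ℂ) - (ξ + τ))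
  set F1 := f (z₂ + μ/(k:ℂ)) (z₁ - μ/(k:ℂ))
  set F2 := f (z₁ - (ξ + τ)/(k:ℂ)) (z₂ + (ξ + τ)/(k:ℂ))
  linear_combination (-(T1 * T2 * D / (T3 * T4) * F1)) * ea
    + (-(T5 * D / T4 * F2)) * eb
end
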